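/- arXiv:2410.23611 — 7 statements merged into one kernel-verified Lean document; each statement's English description precedes it below -/
import Mathlib

section
/- Let n ≥ k ≥ 2 and r ≥ 3 be integers, and let t = ⌈(r-2)k/(r-1)⌉. If P is a family of k-subsets of [n] such that any two distinct members of P intersect in fewer than t elements (an (n,k,t)-packing), then P is r-focal-free: P does not contain r distinct sets A₀, A₁, ..., A_{r-1} such that every element x of A₀ belongs to at least r-2 of the sets A₁, ..., A_{r-1}. -/
open Finset

/-- A family of finsets is `r`-focal-free if it contains no `r` distinct sets
`A 0, A 1, ..., A (r-1)` such that every element of the focus `A 0` belongs to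
at least `r - 2` of the other sets. -/
def IsFocalFree (r : ℕ) {α : Type*} [DecidableEq α] (F : Finset (Finset α)) : Prop :=
  ¬ ∃ (A₀ : Finset α) (A : Fin (r - 1) → Finset α), A₀ ∈ F ∧ (∀ i, A i ∈ F) ∧
      Function.Injective A ∧ (∀ i, A i ≠ A₀) ∧
      ∀ x ∈ A₀, r - 2 ≤ (Finset.univ.filter fun i : Fin (r - 1) => x ∈ A i).card

/-!
Double counting the incidences between the focus `A₀` and the other sets gives
`(r - 2) * #A₀ ≤ ∑ i, #(A₀ ∩ A i)`, while the packing condition bounds each of the `r - 1`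
summands by `t - 1`. Hence `(r - 2) * k ≤ (r - 1) * (t - 1)`, which is impossible because
`t = ⌈(r - 2) * k / (r - 1)⌉` is the least `c` with `(r - 2) * k ≤ (r - 1) * c`.
-/

section Focal

variable {ι α : Type*} [Fintype ι] [DecidableEq α]

theorem card_mul_le_sum_card_inter {s : Finset α} {A : ι → Finset α} {m : ℕ}
    (h : ∀ x ∈ s, m ≤ #{i | x ∈ A i}) : #s * m ≤ ∑ i, #(s ∩ A i) := by
  apply (s.card_nsmul_le_sum _ _ h).trans
  simp_rw [← filter_mem_eq_inter, card_eq_sum_ones, sum_filter]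
  exact sum_comm.le

theorem ceilDiv_lt_of_card_inter_lt [Nonempty ι] {s : Finset α} {A : ι → Finset α} {m t : ℕ}
    (hcov : ∀ x ∈ s, m ≤ #{i | x ∈ A i}) (hlt : ∀ i, #(s ∩ A i) < t) :
    m * #s ⌈/⌉ Fintype.card ι < t := by
  have ht : 0 < t := (Nat.zero_le _).trans_lt (hlt (Classical.arbitrary ι))
  have hsum : m * #s ≤ Fintype.card ι * (t - 1) :=
    calc m * #s ≤ ∑ i, #(s ∩ A i) := mul_comm m #s ▸ card_mul_le_sum_card_inter hcov
      _ ≤ ∑ _i : ι, (t - 1) := sum_le_sum fun i _ ↦ Nat.le_sub_one_of_lt (hlt i)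
      _ = Fintype.card ι * (t - 1) := by rw [sum_const, card_univ, smul_eq_mul]
  have hle := (ceilDiv_le_iff_le_mul Fintype.card_pos).2 hsum
  omega

theorem isFocalFree_of_card_inter_lt {r : ℕ} (hr : 2 ≤ r) {F : Finset (Finset α)}
    (hF : ∀ A ∈ F, ∀ B ∈ F, A ≠ B → #(A ∩ B) < (r - 2) * #A ⌈/⌉ (r - 1)) :
    IsFocalFree r F := by
  rintro ⟨A₀, A, hA₀, hA, -, hne, hfocal⟩
  have : Nonempty (Fin (r - 1)) := ⟨⟨0, by omega⟩⟩
  have hlt := ceilDiv_lt_of_card_inter_lt hfocal fun i ↦ hF A₀ hA₀ (A i) (hA i) (hne i).symm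
  rw [Fintype.card_fin] at hlt
  exact lt_irrefl _ hlt

end Focal

theorem packing_is_focal_free_general {n k r t : ℕ} (hr : 3 ≤ r)
    (ht : t = ((r - 2) * k + r - 2) / (r - 1))
    (P : Finset (Finset (Fin n)))
    (hunif : ∀ A ∈ P, A.card = k)
    (hpack : ∀ A ∈ P, ∀ B ∈ P, A ≠ B → (A ∩ B).card < t) :
    IsFocalFree r P := by
  have hceil : t = (r - 2) * k ⌈/⌉ (r - 1) := by
    rw [ht, Nat.ceilDiv_eq_add_pred_div]; congr 1; omega
  refine isFocalFree_of_card_inter_lt (by omega) fun A hA B hB hAB ↦ ?_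
  rw [hunif A hA, ← hceil]
  exact hpack A hA B hB hAB

/-- An (n,k,t)-packing is r-focal-free. -/
theorem packing_is_focal_free {n k r t : ℕ} (hk : 2 ≤ k) (hn : k ≤ n) (hr : 3 ≤ r)
    (ht : t = ((r - 2) * k + r - 2) / (r - 1))
    (P : Finset (Finset (Fin n)))
    (hunif : ∀ A ∈ P, A.card = k)
    (hpack : ∀ A ∈ P, ∀ B ∈ P, A ≠ B → (A ∩ B).card < t) :
    IsFocalFree r P :=
  packing_is_focal_free_general hr ht P hunif hpack
end

section
/- Let C ⊆ [q]^n be a code with minimum Hamming distance d(C) > ⌊n/(r-1)⌋, where r ≥ 3. Then C is r-focal-free: C contains no r distinct vectors x⁰, x¹, ..., x^{r-1} such that for every coordinate i ∈ [n], at least r-2 of the vectors x¹, ..., x^{r-1} agree with x⁰ in coordinate i. -/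
open Finset

/-! In every coordinate at most one of `x¹, …, x^{r-1}` differs from the focus `x⁰`, so
double counting gives `∑ⱼ d(xʲ, x⁰) ≤ n`. Hence some `xʲ` lies within `⌊n/(r-1)⌋` of `x⁰`,
contradicting the minimum distance. -/

/-- A code `C ⊆ [q]^n` is `r`-focal-free if it contains no `r` distinct vectors
`x 0, ..., x (r-1)` such that in every coordinate, at least `r - 2` of
`x 1, ..., x (r-1)` agree with the focus `x 0`. -/
def IsFocalFreeCode (r n q : ℕ) (C : Finset (Fin n → Fin q)) : Prop :=
  ¬ ∃ (x₀ : Fin n → Fin q) (x : Fin (r - 1) → (Fin n → Fin q)), x₀ ∈ C ∧ (∀ j, x j ∈ C) ∧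
      Function.Injective x ∧ (∀ j, x j ≠ x₀) ∧
      ∀ i : Fin n, r - 2 ≤ (Finset.univ.filter fun j : Fin (r - 1) => x j i = x₀ i).card

theorem Fintype.exists_le_div_card_of_sum_le {ι : Type*} [Fintype ι] [Nonempty ι]
    {f : ι → ℕ} {n : ℕ} (h : ∑ j, f j ≤ n) : ∃ j, f j ≤ n / Fintype.card ι := by
  have hlt : ∑ j, f j < ∑ _j : ι, (n / Fintype.card ι + 1) := by
    rw [sum_const, card_univ, smul_eq_mul]
    exact h.trans_lt (Nat.lt_mul_div_succ n Fintype.card_pos)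
  obtain ⟨j, -, hj⟩ := exists_lt_of_sum_lt hlt
  exact ⟨j, Nat.le_of_lt_succ hj⟩

theorem Fintype.card_filter_not_le_one {ι : Type*} [Fintype ι] (p : ι → Prop) [DecidablePred p]
    (h : Fintype.card ι - 1 ≤ #{j | p j}) : #{j | ¬p j} ≤ 1 := by
  have := card_filter_add_card_filter_not (s := univ) fun j => p j
  rw [card_univ] at this
  omega

section HammingFamily

variable {ι α β : Type*} [Fintype ι] [Fintype α] [DecidableEq β]

theorem sum_hammingDist_eq_sum_card_filter_ne (x : ι → α → β) (x₀ : α → β) :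
    ∑ j, hammingDist (x j) x₀ = ∑ i, #{j | x j i ≠ x₀ i} := by
  simp only [hammingDist, card_filter]
  exact sum_comm

theorem sum_hammingDist_le_card_of_card_filter_ne_le_one {x : ι → α → β} {x₀ : α → β}
    (h : ∀ i, #{j | x j i ≠ x₀ i} ≤ 1) : ∑ j, hammingDist (x j) x₀ ≤ Fintype.card α := by
  rw [sum_hammingDist_eq_sum_card_filter_ne, Fintype.card_eq_sum_ones]
  exact sum_le_sum fun i _ => h i

end HammingFamily

/-- A code with minimum Hamming distance greater than ⌊n/(r-1)⌋ is r-focal-free. -/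
theorem large_distance_implies_focal_free {n q r : ℕ} (hr : 3 ≤ r)
    (C : Finset (Fin n → Fin q))
    (hdist : ∀ x ∈ C, ∀ y ∈ C, x ≠ y →
      n / (r - 1) < (Finset.univ.filter fun i : Fin n => x i ≠ y i).card) :
    IsFocalFreeCode r n q C := by
  rintro ⟨x₀, x, hx₀, hx, -, hne, hagree⟩
  have : Nonempty (Fin (r - 1)) := ⟨⟨0, by omega⟩⟩
  have hdisagree (i : Fin n) : #{j | x j i ≠ x₀ i} ≤ 1 :=
    Fintype.card_filter_not_le_one _ <| by simpa using hagree i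
  obtain ⟨j, hj⟩ := Fintype.exists_le_div_card_of_sum_le
    (sum_hammingDist_le_card_of_card_filter_ne_le_one hdisagree)
  simp only [Fintype.card_fin] at hj
  exact (hj.trans_lt (hdist (x j) (hx j) x₀ hx₀ (hne j))).false
end

section
/- Let n ≥ k ≥ 2 and r ≥ 3, let t = ⌈(r-2)k/(r-1)⌉, and let λ ∈ [r-1] be the unique integer with k + λ ≡ 0 (mod r-1). Let F ⊆ binom([n],k) be an r-focal-free k-uniform hypergraph, and let F₀ = {A ∈ F : every (t-1)-subset of A is contained in some member of F other than A}. Then every A ∈ F₀ has at least binom(k,t) − m(k, k−t, λ) own t-subsets, i.e., t-subsets of A not contained in any other member of F. Here m(k, s, λ) denotes the maximum number of edges in an s-uniform hypergraph on k vertices with no λ pairwise disjoint edges. -/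
/-!
With `q = ⌊k/(r-1)⌋` one has `t = k - q`, so the complements in `A` of the non-own `t`-subsets
are `q`-sets `C` whose complement `A \ C` lies in another member of `F`. Suppose `λ` of them are
pairwise disjoint. The congruence `k + λ ≡ 0 (mod r-1)` makes the rest of `A` have exactly
`(r-1-λ)(q+1)` elements, so it holds `r-1-λ` disjoint `(q+1)`-sets `P`, and each `A \ P` is a
`(t-1)`-set, hence also lies in another member of `F`. This gives `r-1` pairwise disjoint "holes"
in `A`, the complement of each covered by some `B_i ∈ F \ {A}`. Two holes cover `A`, so the `B_i`
are distinct, and each point of `A` lies in at most one hole, hence in at least `r-2` of the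
`B_i`: an `r`-focal configuration with focus `A`. So the complements have no `λ` pairwise
disjoint members, and there are at most `m(k, k-t, λ)` of them.
-/

open Finset

/-- `matchNum n s lam` is the maximum number of edges of an `s`-uniform hypergraph
on `n` vertices containing no `lam` pairwise disjoint edges. -/
noncomputable def matchNum (n s lam : ℕ) : ℕ :=
  sSup {c | ∃ G : Finset (Finset (Fin n)), (∀ e ∈ G, e.card = s) ∧
    (¬ ∃ M : Finset (Finset (Fin n)), M ⊆ G ∧ M.card = lam ∧
      (M : Set (Finset (Fin n))).Pairwise Disjoint) ∧ G.card = c}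

open Function

theorem Nat.mul_add_self_div_succ (m k : ℕ) : (m * k + m) / (m + 1) = k - k / (m + 1) := by
  obtain ⟨q, s, hs, rfl⟩ : ∃ q s, s < m + 1 ∧ k = (m + 1) * q + s :=
    ⟨k / (m + 1), k % (m + 1), Nat.mod_lt _ m.succ_pos, (Nat.div_add_mod k (m + 1)).symm⟩
  rw [Nat.mul_add_div m.succ_pos, Nat.div_eq_of_lt hs, add_zero,
    show (m + 1) * q + s - q = m * q + s by rw [add_mul, one_mul]; omega]
  apply Nat.div_eq_of_lt_le <;> nlinarith

theorem Nat.sub_mul_div_eq_mul_div_add_one {m k lam : ℕ} (hlam1 : 1 ≤ lam) (hlam2 : lam ≤ m)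
    (hlam : (k + lam) % m = 0) : k - lam * (k / m) = (m - lam) * (k / m + 1) := by
  obtain ⟨q, s, hs, rfl⟩ : ∃ q s, s < m ∧ k = m * q + s :=
    ⟨k / m, k % m, Nat.mod_lt _ (by omega), (Nat.div_add_mod k m).symm⟩
  rw [Nat.mul_add_div (by omega), Nat.div_eq_of_lt hs, add_zero]
  have hsl : s + lam = m := by
    rw [add_assoc, Nat.mul_add_mod] at hlam
    obtain ⟨c, hc⟩ := Nat.dvd_of_mod_eq_zero hlam
    rcases c with _ | _ | c <;> nlinarith
  subst hsl
  rw [Nat.add_sub_cancel, show (s + lam) * q + s = lam * q + s * (q + 1) by ring,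
    Nat.add_sub_cancel_left]

section

variable {α : Type*}

def HasMatching (G : Finset (Finset α)) (lam : ℕ) : Prop :=
  ∃ M ⊆ G, #M = lam ∧ (M : Set (Finset α)).Pairwise Disjoint

theorem card_le_matchNum {k s lam : ℕ} {G : Finset (Finset (Fin k))} (hs : ∀ e ∈ G, #e = s)
    (hG : ¬ HasMatching G lam) : #G ≤ matchNum k s lam :=
  le_csSup ⟨Fintype.card (Finset (Fin k)), by rintro c ⟨G', -, -, rfl⟩; exact card_le_univ G'⟩
    ⟨G, hs, hG, rfl⟩

theorem card_le_matchNum_of_subset [DecidableEq α] {A : Finset α} {k s lam : ℕ} (hA : #A = k)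
    {G : Finset (Finset α)} (hGA : ∀ C ∈ G, C ⊆ A ∧ #C = s) (hG : ¬ HasMatching G lam) :
    #G ≤ matchNum k s lam := by
  subst hA
  let e : Fin #A ↪ α := A.equivFin.symm.toEmbedding.trans (.subtype (· ∈ A))
  have he : univ.map e = A := by simp [e, ← map_map, attach_map_val]
  let φ : Finset (Fin #A) ↪ Finset α := (mapEmbedding e).toEmbedding
  let G' := univ.filter fun C => φ C ∈ G
  have hG' : G'.map φ = G := by
    ext C
    refine ⟨fun hC => ?_, fun hC => ?_⟩
    · obtain ⟨C', hC', rfl⟩ := mem_map.1 hC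
      exact (mem_filter.1 hC').2
    · obtain ⟨u, -, rfl⟩ := subset_map_iff.1 (he ▸ (hGA C hC).1)
      exact mem_map_of_mem φ (mem_filter.2 ⟨mem_univ u, hC⟩)
  rw [← hG', card_map]
  refine card_le_matchNum (fun C hC => ?_) fun ⟨M, hMG', hMc, hMd⟩ => hG ?_
  · simpa [φ] using (hGA _ (mem_filter.1 hC).2).2
  refine ⟨M.map φ, hG' ▸ map_subset_map.2 hMG', by rw [card_map, hMc], ?_⟩
  rw [coe_map, (φ.injective.injOn).pairwise_image]
  exact hMd.imp fun C D h => (disjoint_map e).2 h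

theorem exists_pairwise_disjoint_card_eq {s : Finset α} {m u : ℕ} (h : m * u ≤ #s) :
    ∃ P : Fin m → Finset α, (∀ j, P j ⊆ s) ∧ (∀ j, #(P j) = u) ∧ Pairwise (Disjoint on P) := by
  obtain ⟨s', hs', hcard⟩ := exists_subset_card_eq h
  let f : Fin m × Fin u ↪ α := finProdFinEquiv.toEmbedding.trans <|
    (finCongr hcard.symm).toEmbedding.trans <| s'.equivFin.symm.toEmbedding.trans (.subtype _)
  refine ⟨fun j => univ.map ((Embedding.sectR j _).trans f), fun j x hx => ?_,
    fun j => by simp, fun i j hij => disjoint_left.2 fun x hi hj => hij ?_⟩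
  · obtain ⟨a, -, rfl⟩ := mem_map.1 hx
    exact hs' (Subtype.prop _)
  · obtain ⟨a, -, rfl⟩ := mem_map.1 hi
    obtain ⟨b, -, hb⟩ := mem_map.1 hj
    exact (Prod.ext_iff.1 (f.injective hb)).1.symm

end

section

variable {α : Type*} [DecidableEq α]

def IsNonOwn (F : Finset (Finset α)) (A T : Finset α) : Prop :=
  ∃ B ∈ F, B ≠ A ∧ T ⊆ B

instance (F : Finset (Finset α)) (A : Finset α) : DecidablePred (IsNonOwn F A) := fun T =>
  inferInstanceAs (Decidable (∃ B ∈ F, B ≠ A ∧ T ⊆ B))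

variable {F : Finset (Finset α)} {A : Finset α}

theorem not_isFocalFree_of_holes {r : ℕ} (hA : A ∈ F) (hmax : ∀ B ∈ F, A ⊆ B → B = A)
    {ι : Type*} [Fintype ι] (hι : Fintype.card ι = r - 1) {H : ι → Finset α}
    (hH : Pairwise (Disjoint on H)) (hcov : ∀ i, IsNonOwn F A (A \ H i)) :
    ¬ IsFocalFree r F := by
  choose B hBF hBA hB using hcov
  have hhole : ∀ x ∈ A, ∀ i, x ∉ B i → x ∈ H i := fun x hx i hxi =>
    by_contra fun h => hxi (hB i (mem_sdiff.2 ⟨hx, h⟩))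
  have hinj : Injective B := by
    intro i j hij
    by_contra hne
    refine hBA i (hmax _ (hBF i) fun x hx => ?_)
    by_cases hxi : x ∈ H i
    · exact hij ▸ hB j (mem_sdiff.2 ⟨hx, disjoint_left.1 (hH hne) hxi⟩)
    · exact hB i (mem_sdiff.2 ⟨hx, hxi⟩)
  have hmiss : ∀ x ∈ A, #(univ.filter fun i => x ∉ B i) ≤ 1 := fun x hx =>
    card_le_one.2 fun i hi j hj => by_contra fun hne => disjoint_left.1 (hH hne)
      (hhole x hx i (mem_filter.1 hi).2) (hhole x hx j (mem_filter.1 hj).2)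
  let e := (Fintype.equivFinOfCardEq hι).symm
  refine fun hfree => hfree ⟨A, B ∘ e, hA, fun i => hBF _, hinj.comp e.injective,
    fun i => hBA _, fun x hx => ?_⟩
  have hcount : #(univ.filter fun i => x ∈ (B ∘ e) i) = #(univ.filter fun i => x ∈ B i) :=
    card_equiv e (by simp)
  have hsplit := card_filter_add_card_filter_not (s := univ) (p := fun i => x ∈ B i)
  rw [card_univ, hι] at hsplit
  have := hmiss x hx
  omega

theorem not_hasMatching_of_isFocalFree {r q lam : ℕ} (hfree : IsFocalFree r F) (hA : A ∈ F)
    (hmax : ∀ B ∈ F, A ⊆ B → B = A) (hlam : lam ≤ r - 1)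
    (hsize : #A - lam * q = (r - 1 - lam) * (q + 1))
    (hno : ∀ T ∈ A.powersetCard (#A - (q + 1)), IsNonOwn F A T) {G : Finset (Finset α)}
    (hG : ∀ C ∈ G, C ⊆ A ∧ #C = q ∧ IsNonOwn F A (A \ C)) : ¬ HasMatching G lam := by
  rintro ⟨M, hMG, hMc, hMd⟩
  have hU : M.biUnion id ⊆ A := biUnion_subset.2 fun C hC => (hG C (hMG hC)).1
  have hUc : #(M.biUnion id) = lam * q := by
    rw [card_biUnion (t := id) hMd]
    exact (sum_const_nat fun C hC => (hG C (hMG hC)).2.1).trans (by rw [hMc])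
  obtain ⟨P, hPR, hPc, hPd⟩ := exists_pairwise_disjoint_card_eq (m := r - 1 - lam) (u := q + 1)
    (s := A \ M.biUnion id) (by rw [card_sdiff_of_subset hU, hUc, hsize])
  refine not_isFocalFree_of_holes hA hmax (ι := M ⊕ Fin (r - 1 - lam)) (H := Sum.elim (↑) P)
    (by simp [hMc]; omega) ?_ ?_ hfree
  · rintro (C | i) (D | j) hne
    · exact hMd C.2 D.2 fun h => hne (congrArg _ (Subtype.ext h))
    · exact disjoint_of_subset_right (hPR j)
        (disjoint_sdiff.mono_left (subset_biUnion_of_mem id C.2))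
    · exact disjoint_of_subset_left (hPR i)
        (disjoint_sdiff_self_left.mono_right (subset_biUnion_of_mem id D.2))
    · exact hPd fun h => hne (congrArg _ h)
  · rintro (C | j)
    · exact (hG C (hMG C.2)).2.2
    · show IsNonOwn F A (A \ P j)
      have hPA : P j ⊆ A := (hPR j).trans sdiff_subset
      exact hno _ (mem_powersetCard.2 ⟨sdiff_subset, by rw [card_sdiff_of_subset hPA, hPc]⟩)

-- The decidability instance is a binder: for a `Fintype` ground type the theorem's filter
-- decides `∀ B ∈ F, _` through `Fintype`, not through `F`.
theorem choose_sub_card_le_card_own (t : ℕ)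
    [DecidablePred fun T : Finset α => ∀ B ∈ F, B ≠ A → ¬ T ⊆ B] {G : Finset (Finset α)}
    (hG : ∀ T ∈ A.powersetCard t, IsNonOwn F A T → A \ T ∈ G) :
    (#A).choose t - #G ≤ #((A.powersetCard t).filter fun T => ∀ B ∈ F, B ≠ A → ¬ T ⊆ B) := by
  have hnonown : #((A.powersetCard t).filter (IsNonOwn F A)) ≤ #G := by
    refine card_le_card_of_injOn (A \ ·) (fun T hT => hG T (mem_filter.1 hT).1 (mem_filter.1 hT).2)
      fun T hT T' hT' h => ?_
    rw [mem_coe, mem_filter, mem_powersetCard] at hT hT'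
    rw [← Finset.sdiff_sdiff_eq_self hT.1.1, ← Finset.sdiff_sdiff_eq_self hT'.1.1]
    exact congrArg (A \ ·) h
  have hown : (A.powersetCard t).filter (fun T => ∀ B ∈ F, B ≠ A → ¬ T ⊆ B) =
      (A.powersetCard t).filter (¬ IsNonOwn F A ·) := by
    ext T
    simp [IsNonOwn]
  have hsplit := card_filter_add_card_filter_not (s := A.powersetCard t) (p := IsNonOwn F A)
  rw [card_powersetCard, ← hown] at hsplit
  omega

end

theorem many_own_t_subsets_general {n k r t lam : ℕ}
    (ht : t = ((r - 2) * k + r - 2) / (r - 1))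
    (hlam1 : 1 ≤ lam) (hlam2 : lam ≤ r - 1) (hlam : (k + lam) % (r - 1) = 0)
    (F : Finset (Finset (Fin n))) (hunif : ∀ A ∈ F, A.card = k)
    (hfree : IsFocalFree r F)
    (A : Finset (Fin n)) (hA : A ∈ F)
    (hno : ∀ T ∈ A.powersetCard (t - 1), ∃ B ∈ F, B ≠ A ∧ T ⊆ B) :
    k.choose t - matchNum k (k - t) lam ≤
      ((A.powersetCard t).filter fun T => ∀ B ∈ F, B ≠ A → ¬ T ⊆ B).card := by
  have hAk : #A = k := hunif A hA
  have hmax : ∀ B ∈ F, A ⊆ B → B = A := fun B hB hAB =>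
    (eq_of_subset_of_card_le hAB (by rw [hunif B hB, hAk])).symm
  have htq : t = k - k / (r - 1) := by
    rw [ht, show (r - 2) * k + r - 2 = (r - 2) * k + (r - 2) by omega,
      show r - 1 = r - 2 + 1 by omega, Nat.mul_add_self_div_succ]
  have hsize := Nat.sub_mul_div_eq_mul_div_add_one hlam1 hlam2 hlam
  obtain ⟨q, hq⟩ : ∃ q, k / (r - 1) = q := ⟨_, rfl⟩
  rw [hq] at htq hsize
  subst htq hAk
  have hkt : #A - (#A - q) = q := Nat.sub_sub_self (hq ▸ Nat.div_le_self _ _)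
  let G := (A.powersetCard q).filter fun C => IsNonOwn F A (A \ C)
  have hG : #G ≤ matchNum #A q lam := by
    refine card_le_matchNum_of_subset rfl (fun C hC => mem_powersetCard.1 (mem_filter.1 hC).1)
      (not_hasMatching_of_isFocalFree hfree hA hmax hlam2 hsize
        (by rw [Nat.sub_sub] at hno; exact hno) fun C hC => ?_)
    obtain ⟨hC, hnon⟩ := mem_filter.1 hC
    exact ⟨(mem_powersetCard.1 hC).1, (mem_powersetCard.1 hC).2, hnon⟩
  rw [hkt]
  refine (Nat.sub_le_sub_left hG _).trans (choose_sub_card_le_card_own _ fun T hT hnon => ?_)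
  obtain ⟨hTA, hTt⟩ := mem_powersetCard.1 hT
  refine mem_filter.2 ⟨mem_powersetCard.2 ⟨sdiff_subset, ?_⟩, ?_⟩
  · rw [card_sdiff_of_subset hTA, hTt, hkt]
  · rwa [Finset.sdiff_sdiff_eq_self hTA]

/-- Every member of an r-focal-free k-uniform family with no own (t-1)-subsets
has many own t-subsets. -/
theorem many_own_t_subsets {n k r t lam : ℕ} (hn : k ≤ n) (hk : 2 ≤ k) (hr : 3 ≤ r)
    (ht : t = ((r - 2) * k + r - 2) / (r - 1))
    (hlam1 : 1 ≤ lam) (hlam2 : lam ≤ r - 1) (hlam : (k + lam) % (r - 1) = 0)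
    (F : Finset (Finset (Fin n))) (hunif : ∀ A ∈ F, A.card = k)
    (hfree : IsFocalFree r F)
    (A : Finset (Fin n)) (hA : A ∈ F)
    (hno : ∀ T ∈ A.powersetCard (t - 1), ∃ B ∈ F, B ≠ A ∧ T ⊆ B) :
    k.choose t - matchNum k (k - t) lam ≤
      ((A.powersetCard t).filter fun T => ∀ B ∈ F, B ≠ A → ¬ T ⊆ B).card :=
  many_own_t_subsets_general ht hlam1 hlam2 hlam F hunif hfree A hA hno
end

section
/- Let C ⊆ [q]^n be a code with |C| ≥ r, r ≥ 3, and suppose there is a vector x ∈ C and a partition [n] = T₁ ∪ ... ∪ T_{r-1} into nonempty pairwise disjoint sets such that for each i ∈ [r-1], the subsequence x restricted to [n] \ T_i equals the corresponding subsequence of some codeword in C other than x. Then C contains an r-focal code with focus x. -/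
/-!
Choose for each part `T i` a codeword `y i ≠ x` agreeing with `x` off `T i`. Since the parts are
disjoint, two equal choices would agree with `x` everywhere, and at each coordinate at most one
choice (the one whose part contains it) can differ from `x`.
-/

open Finset Function

variable {ι α β : Type*}

lemma card_filter_mem_le_one [Fintype ι] [DecidableEq α] {T : ι → Finset α}
    (hT : Pairwise (Disjoint on T)) (a : α) : #{i | a ∈ T i} ≤ 1 := by
  refine Finset.card_le_one.mpr fun i hi j hj => ?_
  by_contra hij
  simp only [mem_filter, mem_univ, true_and] at hi hj
  exact disjoint_left.mp (hT hij) hi hj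

lemma injective_of_ne_of_eq_off_disjoint {T : ι → Finset α} (hT : Pairwise (Disjoint on T))
    {x : α → β} {y : ι → α → β} (hne : ∀ i, y i ≠ x) (hy : ∀ i, ∀ a ∉ T i, y i a = x a) :
    Function.Injective y := by
  intro i j hij
  by_contra hij'
  refine hne i (funext fun a => ?_)
  by_cases ha : a ∈ T i
  · rw [hij]
    exact hy j a (disjoint_left.mp (hT hij') ha)
  · exact hy i a ha

lemma card_sub_one_le_card_filter_eq [Fintype ι] [DecidableEq α] [DecidableEq β]
    {T : ι → Finset α} (hT : Pairwise (Disjoint on T)) {x : α → β} {y : ι → α → β}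
    (hy : ∀ i, ∀ a ∉ T i, y i a = x a) (a : α) :
    Fintype.card ι - 1 ≤ #{i | y i a = x a} := by
  have hdiff : #{i | ¬y i a = x a} ≤ 1 := by
    refine (card_le_card fun i hi => ?_).trans (card_filter_mem_le_one hT a)
    simp only [mem_filter, mem_univ, true_and] at hi ⊢
    exact not_imp_comm.mp (hy i a) hi
  have hsplit := card_filter_add_card_filter_not (s := univ) fun i => y i a = x a
  rw [card_univ] at hsplit
  omega

theorem partition_nonown_gives_focal_code_general {n q r : ℕ}
    (C : Finset (Fin n → Fin q))
    (x : Fin n → Fin q)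
    (T : Fin (r - 1) → Finset (Fin n))
    (hdisj : ∀ i j, i ≠ j → Disjoint (T i) (T j))
    (hnonown : ∀ i, ∃ y ∈ C, y ≠ x ∧ ∀ j ∉ T i, y j = x j) :
    ∃ y : Fin (r - 1) → (Fin n → Fin q), Function.Injective y ∧
      (∀ j, y j ∈ C ∧ y j ≠ x) ∧
      ∀ i : Fin n,
        r - 2 ≤ (Finset.univ.filter fun j : Fin (r - 1) => y j i = x i).card := by
  choose y hyC hyx hyagree using hnonown
  have hT : Pairwise (Disjoint on T) := fun i j => hdisj i j
  refine ⟨y, injective_of_ne_of_eq_off_disjoint hT hyx hyagree,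
    fun j => ⟨hyC j, hyx j⟩, fun i => ?_⟩
  have hcount := card_sub_one_le_card_filter_eq hT hyagree i
  rw [Fintype.card_fin] at hcount
  omega

/-- Observation (i) for codes: a partition of coordinates into non-own complements
yields an r-focal code with focus x. -/
theorem partition_nonown_gives_focal_code {n q r : ℕ} (hr : 3 ≤ r)
    (C : Finset (Fin n → Fin q)) (hC : r ≤ C.card)
    (x : Fin n → Fin q) (hx : x ∈ C)
    (T : Fin (r - 1) → Finset (Fin n)) (hne : ∀ i, (T i).Nonempty)
    (hdisj : ∀ i j, i ≠ j → Disjoint (T i) (T j))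
    (hcover : Finset.univ.biUnion T = Finset.univ)
    (hnonown : ∀ i, ∃ y ∈ C, y ≠ x ∧ ∀ j ∉ T i, y j = x j) :
    ∃ y : Fin (r - 1) → (Fin n → Fin q), Function.Injective y ∧
      (∀ j, y j ∈ C ∧ y j ≠ x) ∧
      ∀ i : Fin n,
        r - 2 ≤ (Finset.univ.filter fun j : Fin (r - 1) => y j i = x i).card :=
  partition_nonown_gives_focal_code_general C x T hdisj hnonown
end

section
/- Let r ≥ 3, n ≥ 2 with r-1 dividing n+1, and q ≥ 2, and suppose there exists an orthogonal array OA(t, n, q) with t = ⌈(r-2)n/(r-1)⌉. Then there exists an r-focal-free code C ⊆ [q]^n with |C| = q^t. -/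
open Finset

/-- From an orthogonal array OA(t,n,q) with t = ⌈(r-2)n/(r-1)⌉ one obtains an
r-focal-free code of size q^t. -/
theorem focal_free_code_from_OA {n q r t : ℕ} (hr : 3 ≤ r) (hn : 2 ≤ n) (hq : 2 ≤ q)
    (hdvd : (r - 1) ∣ (n + 1))
    (ht : t = ((r - 2) * n + r - 2) / (r - 1))
    (hOA : ∃ A : Fin (q ^ t) → (Fin n → Fin q), ∀ S : Finset (Fin n), S.card = t →
      ∀ f : Fin n → Fin q, ∃! j : Fin (q ^ t), ∀ i ∈ S, A j i = f i) :
    ∃ C : Finset (Fin n → Fin q), IsFocalFreeCode r n q C ∧ C.card = q ^ t := by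
  obtain ⟨a, rfl⟩ : ∃ a, r = a + 3 := ⟨r - 3, by omega⟩
  obtain ⟨k, hk⟩ := hdvd
  have hk1 : 1 ≤ k := by
    rcases Nat.eq_zero_or_pos k with h | h
    · subst h; simp at hk
    · exact h
  have hr1 : a + 3 - 1 = a + 2 := rfl
  have hr2 : a + 3 - 2 = a + 1 := rfl
  rw [hr1] at hk
  have ht' : t = (a + 1) * k := by
    rw [ht]
    have h1 : (a + 3 - 2) * n + (a + 3) - 2 = (a + 3 - 1) * ((a + 1) * k) := by
      rw [hr1, hr2]
      have : (a + 1) * n + (a + 1) = (a + 1) * (n + 1) := by ring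
      have h2 : (a + 1) * (n + 1) = (a + 2) * ((a + 1) * k) := by rw [hk]; ring
      omega
    rw [h1, hr1, Nat.mul_div_cancel_left _ (by omega)]
  have hsum : t + k = n + 1 := by
    have : (a + 1) * k + k = (a + 2) * k := by ring
    omega
  have htn : t ≤ n := by omega
  obtain ⟨A, hA⟩ := hOA
  -- injectivity of A
  have hAinj : Function.Injective A := by
    intro j j' h
    obtain ⟨S, -, hS⟩ := Finset.exists_subset_card_eq (s := (univ : Finset (Fin n))) (n := t)
      (by simpa using htn)
    obtain ⟨u, -, huniq⟩ := hA S hS (A j)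
    have h1 : j = u := huniq j (fun i _ => rfl)
    have h2 : j' = u := huniq j' (fun i _ => by rw [← h])
    rw [h1, h2]
  -- distinct rows agree in < t coordinates
  have agree : ∀ j j' : Fin (q ^ t), A j ≠ A j' →
      (univ.filter fun i => A j i = A j' i).card < t := by
    intro j j' hne
    by_contra hcon
    push_neg at hcon
    obtain ⟨S, hSsub, hScard⟩ := Finset.exists_subset_card_eq hcon
    obtain ⟨u, -, huniq⟩ := hA S hScard (A j')
    have h1 : j = u := huniq j (fun i hi => (Finset.mem_filter.mp (hSsub hi)).2)
    have h2 : j' = u := huniq j' (fun i _ => rfl)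
    exact hne (by rw [h1, h2])
  refine ⟨Finset.image A univ, ?_, ?_⟩
  · rintro ⟨x₀, x, hx₀, hx, hxinj, hxne, hcond⟩
    obtain ⟨j₀, -, hj₀⟩ := Finset.mem_image.mp hx₀
    choose g hg1 hg2 using fun j => Finset.mem_image.mp (hx j)
    -- each x j differs from x₀ in ≥ k coordinates
    have hbig : ∀ j, k ≤ (univ.filter fun i => ¬ x j i = x₀ i).card := by
      intro j
      have h1 := agree (g j) j₀ (by rw [hg2 j, hj₀]; exact hxne j)
      rw [hg2 j, hj₀] at h1
      have h2 := Finset.card_filter_add_card_filter_not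
        (s := (univ : Finset (Fin n))) (p := fun i => x j i = x₀ i)
      simp only [Finset.card_univ, Fintype.card_fin] at h2
      omega
    -- per-coordinate at most one disagreement
    have hsmall : ∀ i : Fin n, (univ.filter fun j => ¬ x j i = x₀ i).card ≤ 1 := by
      intro i
      have h1 := hcond i
      have h2 := Finset.card_filter_add_card_filter_not
        (s := (univ : Finset (Fin (a + 3 - 1)))) (p := fun j => x j i = x₀ i)
      simp only [Finset.card_univ, Fintype.card_fin] at h2
      omega
    -- double counting
    have key : ∑ j : Fin (a + 3 - 1), (univ.filter fun i => ¬ x j i = x₀ i).card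
        = ∑ i : Fin n, (univ.filter fun j => ¬ x j i = x₀ i).card := by
      simp only [Finset.card_filter]
      exact Finset.sum_comm
    have hlow : (a + 2) * k ≤ ∑ j : Fin (a + 3 - 1), (univ.filter fun i => ¬ x j i = x₀ i).card := by
      calc (a + 2) * k = ∑ _j : Fin (a + 3 - 1), k := by
            simp [Finset.sum_const, Finset.card_univ, hr1]
        _ ≤ _ := Finset.sum_le_sum (fun j _ => hbig j)
    have hhigh : ∑ i : Fin n, (univ.filter fun j => ¬ x j i = x₀ i).card ≤ n := by
      calc ∑ i : Fin n, (univ.filter fun j => ¬ x j i = x₀ i).card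
          ≤ ∑ _i : Fin n, 1 := Finset.sum_le_sum (fun i _ => hsmall i)
        _ = n := by simp
    omega
  · rw [Finset.card_image_of_injective _ hAinj, Finset.card_univ, Fintype.card_fin]
end

section
/- Let r ≥ 3, k ≥ 2, t = ⌈(r-2)k/(r-1)⌉, and λ ∈ [r-1] with k + λ ≡ 0 (mod r-1). Suppose V₁, ..., V_r are k-subsets of [n] forming an r-focal hypergraph with focus V_r, and suppose |V_r ∩ V_i| ≤ t for all i ∈ [r-1]. Then there exist at least λ distinct indices i ∈ [r-1] with |V_r \ V_i| = k − t (equivalently |V_r ∩ V_i| = t). -/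
/-!
Write `m = r - 1` and `d i = |V_r \ V_i|`. Each `d i` is at least `k - t`, and the focal
condition makes the sets `V_r \ V_i` pairwise disjoint inside `V_r`, so `∑ d i ≤ k`.
Every non-tight index contributes at least `k - t + 1`, hence
`m (k - t + 1) ≤ k + #{tight indices}`; and the choice of `t` and `λ` makes
`m (k - t + 1) = k + λ` exactly.
-/

open Finset Function

theorem Finset.pairwise_disjoint_sdiff_of_card_sub_one_le_card_filter_mem
    {ι α : Type*} [Fintype ι] [DecidableEq α] {s : Finset α} {F : ι → Finset α}
    (h : ∀ x ∈ s, Fintype.card ι - 1 ≤ #{i | x ∈ F i}) :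
    Pairwise (Disjoint on fun i => s \ F i) := by
  classical
  intro i j hij
  rw [Function.onFun, disjoint_left]
  intro x hxi hxj
  rw [mem_sdiff] at hxi hxj
  have hsub : ({i | x ∈ F i} : Finset ι) ⊆ univ \ {i, j} := by
    intro l hl
    rw [mem_filter] at hl
    rw [mem_sdiff, mem_insert, mem_singleton]
    refine ⟨hl.1, ?_⟩
    rintro (rfl | rfl)
    exacts [hxi.2 hl.2, hxj.2 hl.2]
  have hcard := card_le_card hsub
  rw [card_sdiff_of_subset (subset_univ _), card_pair hij, card_univ] at hcard
  have hcover := h x hxi.1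
  have hpair := card_le_univ ({i, j} : Finset ι)
  rw [card_pair hij] at hpair
  omega

theorem Finset.sum_card_le_card_of_pairwise_disjoint {ι α : Type*} [Fintype ι] [DecidableEq α]
    {s : Finset α} {t : ι → Finset α} (hsub : ∀ i, t i ⊆ s) (hdisj : Pairwise (Disjoint on t)) :
    ∑ i, #(t i) ≤ #s := by
  rw [← card_biUnion fun i _ j _ hij => hdisj hij]
  exact card_le_card (biUnion_subset.mpr fun i _ => hsub i)

theorem Finset.card_mul_succ_le_sum_add_card_filter_eq {ι : Type*} [Fintype ι] {f : ι → ℕ}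
    {a : ℕ} (h : ∀ i, a ≤ f i) :
    Fintype.card ι * (a + 1) ≤ ∑ i, f i + #{i | f i = a} := by
  rw [card_filter, ← sum_add_distrib, ← smul_eq_mul, ← card_univ, ← sum_const]
  refine sum_le_sum fun i _ => ?_
  have hi := h i
  split_ifs <;> omega

theorem Nat.mul_sub_div_add_one_eq {m k lam : ℕ} (hlam1 : 1 ≤ lam) (hlam2 : lam ≤ m)
    (hdvd : m ∣ k + lam) : m * (k - (m - 1) * (k + 1) / m + 1) = k + lam := by
  obtain ⟨q, hq⟩ := hdvd
  have hq1 : 1 ≤ q := Nat.pos_of_ne_zero (by rintro rfl; omega)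
  have hqk : q ≤ k + 1 := by nlinarith
  -- division with remainder `λ - 1 < m`
  have hexp : (m - 1) * (k + 1) = (lam - 1) + m * (k + 1 - q) := by
    zify [hlam1, hqk, show 1 ≤ m by omega] at hq ⊢
    linear_combination -hq
  rw [hexp, Nat.add_mul_div_left _ _ (by omega), Nat.div_eq_of_lt (by omega), zero_add, hq]
  congr 1
  omega

theorem many_tight_intersections_general {n k r t lam : ℕ}
    (ht : t = ((r - 2) * k + r - 2) / (r - 1))
    (hlam1 : 1 ≤ lam) (hlam2 : lam ≤ r - 1) (hlam : (k + lam) % (r - 1) = 0)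
    (Vr : Finset (Fin n)) (V : Fin (r - 1) → Finset (Fin n))
    (hcardr : Vr.card = k)
    (hfocal : ∀ x ∈ Vr,
      r - 2 ≤ (Finset.univ.filter fun i : Fin (r - 1) => x ∈ V i).card)
    (hint : ∀ i, (Vr ∩ V i).card ≤ t) :
    lam ≤ (Finset.univ.filter fun i : Fin (r - 1) => (Vr \ V i).card = k - t).card := by
  have hdisj : Pairwise (Disjoint on fun i => Vr \ V i) :=
    pairwise_disjoint_sdiff_of_card_sub_one_le_card_filter_mem fun x hx => by
      simpa [Fintype.card_fin, Nat.sub_sub] using hfocal x hx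
  have hsum : ∑ i, #(Vr \ V i) ≤ k :=
    hcardr ▸ sum_card_le_card_of_pairwise_disjoint (fun _ => sdiff_subset) hdisj
  have hlower : ∀ i, k - t ≤ #(Vr \ V i) := fun i => by
    have hsplit := card_inter_add_card_sdiff Vr (V i)
    have hi := hint i
    omega
  have hcount := card_mul_succ_le_sum_add_card_filter_eq hlower
  have htight : (r - 1) * (k - t + 1) = k + lam := by
    have hnum : (r - 2) * k + r - 2 = (r - 1 - 1) * (k + 1) := by
      rw [show r - 1 - 1 = r - 2 by omega, mul_add, mul_one]
      omega
    rw [ht, hnum]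
    exact Nat.mul_sub_div_add_one_eq hlam1 hlam2 (Nat.dvd_of_mod_eq_zero hlam)
  rw [Fintype.card_fin] at hcount
  omega

/-- In an r-focal hypergraph of k-sets with focus V_r where all intersections with
the focus have size at most t, at least λ of them have size exactly t. -/
theorem many_tight_intersections {n k r t lam : ℕ} (hr : 3 ≤ r) (hk : 2 ≤ k)
    (ht : t = ((r - 2) * k + r - 2) / (r - 1))
    (hlam1 : 1 ≤ lam) (hlam2 : lam ≤ r - 1) (hlam : (k + lam) % (r - 1) = 0)
    (Vr : Finset (Fin n)) (V : Fin (r - 1) → Finset (Fin n))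
    (hcardr : Vr.card = k) (hcard : ∀ i, (V i).card = k)
    (hinj : Function.Injective V) (hneA : ∀ i, V i ≠ Vr)
    (hfocal : ∀ x ∈ Vr,
      r - 2 ≤ (Finset.univ.filter fun i : Fin (r - 1) => x ∈ V i).card)
    (hint : ∀ i, (Vr ∩ V i).card ≤ t) :
    lam ≤ (Finset.univ.filter fun i : Fin (r - 1) => (Vr \ V i).card = k - t).card :=
  many_tight_intersections_general ht hlam1 hlam2 hlam Vr V hcardr hfocal hint
end

section
/- Let r ≥ 3, n ≥ 2 and q ≥ 2, write n = (r-1)d − 1 with d ≥ 1, and let C ⊆ [q]^n. For S ⊆ [n], let U_S = {x ∈ C : for all y ∈ C \ {x}, x_S ≠ y_S} (codewords whose restriction to S is an own subsequence). Then |U_{[n-d+1]}| ≤ q^{n-d+1} − (q−1)·|U_{[n-d]}|. -/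
open Finset

private lemma own_sub_aux {N Q M : ℕ} (hM : M + 1 ≤ N)
    (C U1 U0 : Finset (Fin N → Fin Q))
    (hP1 : ∀ x ∈ U1, x ∈ C ∧ ∀ y ∈ C, y ≠ x → ∃ i : Fin N, (i : ℕ) < M + 1 ∧ x i ≠ y i)
    (hP0 : ∀ x ∈ U0, x ∈ C ∧ ∀ y ∈ C, y ≠ x → ∃ i : Fin N, (i : ℕ) < M ∧ x i ≠ y i) :
    U1.card + (Q - 1) * U0.card ≤ Q ^ (M + 1) := by
  classical
  let f : (Fin N → Fin Q) → (Fin (M + 1) → Fin Q) := fun x i => x (Fin.castLE hM i)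
  let lst : Fin (M + 1) := ⟨M, Nat.lt_succ_self M⟩
  let lst' : Fin N := Fin.castLE hM lst
  -- f is injective on U1
  have inj1 : Set.InjOn f ↑U1 := by
    intro x hx y hy hxy
    by_contra hne
    obtain ⟨i, hi, hine⟩ := (hP1 x hx).2 y (hP1 y hy).1 (fun h => hne h.symm)
    have hcast : Fin.castLE hM (⟨(i : ℕ), hi⟩ : Fin (M + 1)) = i := Fin.ext rfl
    have := congrFun hxy (⟨(i : ℕ), hi⟩ : Fin (M + 1))
    simp only [f, hcast] at this
    exact hine this
  let g : (Fin N → Fin Q) → Fin Q → (Fin (M + 1) → Fin Q) :=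
    fun x a => Function.update (f x) lst a
  -- agreement on coordinates < M from equality away from lst
  have agree : ∀ (x y : Fin N → Fin Q) (a b : Fin Q), g x a = g y b →
      ∀ i : Fin N, (i : ℕ) < M → x i = y i := by
    intro x y a b hg i hi
    have hilt : (i : ℕ) < M + 1 := by omega
    have hne : (⟨(i : ℕ), hilt⟩ : Fin (M + 1)) ≠ lst := by
      simp only [lst, Fin.ne_iff_vne]
      omega
    have hcast : Fin.castLE hM (⟨(i : ℕ), hilt⟩ : Fin (M + 1)) = i := Fin.ext rfl
    have := congrFun hg (⟨(i : ℕ), hilt⟩ : Fin (M + 1))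
    simpa only [g, Function.update_of_ne hne, f, hcast] using this
  let B : Finset (Fin (M + 1) → Fin Q) :=
    U0.biUnion (fun x => (Finset.univ.filter (fun a : Fin Q => a ≠ x lst')).image (g x))
  have gx_inj : ∀ x : Fin N → Fin Q, Function.Injective (g x) := by
    intro x a b h
    simpa only [g, Function.update_self] using congrFun h lst
  have hBcard : B.card = (Q - 1) * U0.card := by
    rw [Finset.card_biUnion]
    · have hterm : ∀ x : Fin N → Fin Q,
          ((Finset.univ.filter (fun a : Fin Q => a ≠ x lst')).image (g x)).card = Q - 1 := by
        intro x
        rw [Finset.card_image_of_injective _ (gx_inj x), Finset.filter_ne',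
          Finset.card_erase_of_mem (mem_univ _), card_univ, Fintype.card_fin]
      simp only [hterm, Finset.sum_const, smul_eq_mul]
      ring
    · intro x hx y hy hxy
      rw [Function.onFun, Finset.disjoint_left]
      intro z hzx hzy
      simp only [Finset.mem_image, Finset.mem_filter, Finset.mem_univ, true_and] at hzx hzy
      obtain ⟨a, _, ha⟩ := hzx
      obtain ⟨b, _, hb⟩ := hzy
      have hg : g x a = g y b := ha.trans hb.symm
      refine hxy ?_
      by_contra hne
      obtain ⟨i, hi, hine⟩ := (hP0 x hx).2 y (hP0 y hy).1 (fun h => hne h.symm)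
      exact hine (agree x y a b hg i hi)
  have hdisj : Disjoint (U1.image f) B := by
    rw [Finset.disjoint_left]
    intro z hz hzB
    simp only [Finset.mem_image] at hz
    obtain ⟨w, hw, hfw⟩ := hz
    simp only [B, Finset.mem_biUnion, Finset.mem_image, Finset.mem_filter, Finset.mem_univ,
      true_and] at hzB
    obtain ⟨x, hx, a, hane, hga⟩ := hzB
    have hfg : f w = g x a := hfw.trans hga.symm
    have hfwg : f w = g w (w lst') := by
      funext i
      by_cases hi : i = lst
      · subst hi
        simp only [g, Function.update_self, f, lst']
      · simp only [g, Function.update_of_ne hi]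
    have hg2 : g w (w lst') = g x a := hfwg.symm.trans hfg
    by_cases hwx : w = x
    · subst hwx
      have := congrFun hg2 lst
      simp only [g, Function.update_self] at this
      exact hane this.symm
    · obtain ⟨i, hi, hine⟩ := (hP0 x hx).2 w (hP1 w hw).1 hwx
      exact hine (agree x w a (w lst') hg2.symm i hi)
  have hcard_union : (U1.image f ∪ B).card ≤ Q ^ (M + 1) := by
    calc (U1.image f ∪ B).card ≤ (Finset.univ : Finset (Fin (M + 1) → Fin Q)).card :=
          Finset.card_le_card (Finset.subset_univ _)
      _ = Q ^ (M + 1) := by simp [Finset.card_univ]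
  have hu := Finset.card_union_of_disjoint hdisj
  rw [Finset.card_image_of_injOn inj1, hBcard] at hu
  omega

/-- The key counting inequality for own subsequences:
|U_{[n-d+1]}| ≤ q^(n-d+1) - (q-1)·|U_{[n-d]}|. -/
theorem own_subsequence_counting {n q r d : ℕ} (hr : 3 ≤ r) (hn : 2 ≤ n) (hq : 2 ≤ q)
    (hd : 1 ≤ d) (hnd : n + 1 = (r - 1) * d)
    (C : Finset (Fin n → Fin q)) :
    ((C.filter (fun x => ∀ y ∈ C, y ≠ x →
        ∃ i ∈ Finset.univ.filter (fun i : Fin n => (i : ℕ) < n - d + 1),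
          x i ≠ y i)).card : ℤ) ≤
      (q : ℤ) ^ (n - d + 1) - ((q : ℤ) - 1) *
        (C.filter (fun x => ∀ y ∈ C, y ≠ x →
          ∃ i ∈ Finset.univ.filter (fun i : Fin n => (i : ℕ) < n - d),
            x i ≠ y i)).card := by
  have h1 : n - d + 1 ≤ n := by omega
  have hc : ((q - 1 : ℕ) : ℤ) = (q : ℤ) - 1 := by omega
  have key : (C.filter (fun x => ∀ y ∈ C, y ≠ x →
        ∃ i ∈ Finset.univ.filter (fun i : Fin n => (i : ℕ) < n - d + 1), x i ≠ y i)).card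
      + (q - 1) * (C.filter (fun x => ∀ y ∈ C, y ≠ x →
        ∃ i ∈ Finset.univ.filter (fun i : Fin n => (i : ℕ) < n - d), x i ≠ y i)).card
      ≤ q ^ (n - d + 1) := by
    apply own_sub_aux h1 C
    · intro x hx
      simp only [Finset.mem_filter, Finset.mem_univ, true_and] at hx
      exact hx
    · intro x hx
      simp only [Finset.mem_filter, Finset.mem_univ, true_and] at hx
      exact hx
  have keyZ := (Nat.cast_le (α := ℤ)).mpr key
  simp only [Nat.cast_add, Nat.cast_mul, Nat.cast_pow, hc] at keyZ
  linarith
end
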